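/- arXiv:2303.00629 — 2 statements merged into one kernel-verified Lean document; each statement's English description precedes it below -/
import Mathlib

section
/- Let ℓ be a natural number with ℓ ≡ 2 (mod 4) and ℓ ≥ 6, and let m be an even natural number. Then g(ℓ,m) = g(ℓ−2,m) + g(ℓ−2,m−2), where the second arguments are interpreted as integers (so a term with negative second argument is 0). -/
/-- `ℓ` contains `m` to base 2: there exists `k` with `m < 2^k ≤ ℓ`, and every
binary digit of `m` is at most the corresponding binary digit of `ℓ`
(equivalently, the bitwise AND of `m` and `ℓ` equals `m`). -/
def ContainsBase2 (l m : ℕ) : Prop :=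
  (∃ k, m < 2 ^ k ∧ 2 ^ k ≤ l) ∧ m &&& l = m

-- `g ℓ m = 1` if `m ≥ 0` and `ℓ` contains `m` to base 2, and `g ℓ m = 0` otherwise.
open Classical in
noncomputable def g (l : ℕ) (m : ℤ) : ℤ :=
  if 0 ≤ m ∧ ContainsBase2 l m.toNat then 1 else 0

lemma land_eq_left_iff (m l : ℕ) :
    m &&& l = m ↔ ∀ i, m.testBit i = true → l.testBit i = true := by
  constructor
  · intro h i hi
    have h2 := congrArg (fun x => x.testBit i) h
    simp only [Nat.testBit_land, hi, Bool.true_and] at h2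
    exact h2
  · intro h
    apply Nat.eq_of_testBit_eq
    intro i
    rw [Nat.testBit_land]
    cases hm : m.testBit i
    · simp
    · simp [h i hm]

lemma tb1_true {m : ℕ} (h : m % 4 = 2) : m.testBit 1 = true := by
  simp only [Nat.testBit_eq_decide_div_mod_eq, decide_eq_true_eq]
  omega

lemma tb1_false {m : ℕ} (h : m % 4 = 0) : m.testBit 1 = false := by
  simp only [Nat.testBit_eq_decide_div_mod_eq, decide_eq_false_iff_not]
  omega

lemma testBit_two_div (n : ℕ) (i : ℕ) : n.testBit (i + 2) = (n / 4).testBit i := by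
  rw [Nat.testBit_succ, Nat.testBit_succ, Nat.div_div_eq_div_mul]

lemma tb_rest {n : ℕ} (hn : n % 4 = 2) (i : ℕ) :
    (n - 2).testBit (i + 2) = n.testBit (i + 2) := by
  rw [testBit_two_div, testBit_two_div]
  congr 1
  omega

lemma tb0_rest {n : ℕ} (hn : n % 4 = 2) :
    (n - 2).testBit 0 = n.testBit 0 := by
  simp only [Nat.testBit_eq_decide_div_mod_eq]
  rw [decide_eq_decide]
  omega


lemma pow_mod4 {k : ℕ} (hk : 2 ≤ k) : 2 ^ k % 4 = 0 := by
  have : (4 : ℕ) ∣ 2 ^ k := by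
    have : (2:ℕ)^2 ∣ 2^k := pow_dvd_pow 2 hk
    simpa using this
  omega

lemma pow_le_two {k : ℕ} (hk : k ≤ 1) : 2 ^ k ≤ 2 := by
  interval_cases k <;> norm_num

lemma contA {l m : ℕ} (hl : l % 4 = 2) (hl6 : 6 ≤ l) (hm : m % 4 = 0) :
    ContainsBase2 l m ↔ ContainsBase2 (l - 2) m := by
  unfold ContainsBase2
  rw [land_eq_left_iff, land_eq_left_iff]
  constructor
  · rintro ⟨⟨k, hk1, hk2⟩, hand⟩
    refine ⟨?_, ?_⟩
    · by_cases h2 : 2 ≤ k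
      · exact ⟨k, hk1, by have := pow_mod4 h2; omega⟩
      · refine ⟨2, ?_, by omega⟩
        have := pow_le_two (by omega : k ≤ 1)
        norm_num; omega
    · intro i hi
      match i with
      | 0 => rw [tb0_rest hl]; exact hand 0 hi
      | 1 => rw [tb1_false hm] at hi; exact absurd hi (by simp)
      | (j+2) => rw [tb_rest hl]; exact hand _ hi
  · rintro ⟨⟨k, hk1, hk2⟩, hand⟩
    refine ⟨⟨k, hk1, by omega⟩, ?_⟩
    intro i hi
    match i with
    | 0 => rw [← tb0_rest hl]; exact hand 0 hi
    | 1 => rw [tb1_false hm] at hi; exact absurd hi (by simp)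
    | (j+2) => rw [← tb_rest hl]; exact hand _ hi

lemma contB {l m : ℕ} (hl : l % 4 = 2) (hl6 : 6 ≤ l) (hm : m % 4 = 2) :
    ContainsBase2 l m ↔ ContainsBase2 (l - 2) (m - 2) := by
  unfold ContainsBase2
  rw [land_eq_left_iff, land_eq_left_iff]
  have hm2 : (m - 2) % 4 = 0 := by omega
  constructor
  · rintro ⟨⟨k, hk1, hk2⟩, hand⟩
    have hk2' : 2 ≤ k := by
      by_contra h
      have := pow_le_two (by omega : k ≤ 1)
      omega
    have := pow_mod4 hk2'
    refine ⟨⟨k, by omega, by omega⟩, ?_⟩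
    intro i hi
    match i with
    | 0 => rw [tb0_rest hl]; rw [tb0_rest hm] at hi; exact hand 0 hi
    | 1 => rw [tb1_false hm2] at hi; exact absurd hi (by simp)
    | (j+2) => rw [tb_rest hl]; rw [tb_rest hm] at hi; exact hand _ hi
  · rintro ⟨⟨k, hk1, hk2⟩, hand⟩
    refine ⟨?_, ?_⟩
    · by_cases h2 : 2 ≤ k
      · have := pow_mod4 h2
        exact ⟨k, by omega, by omega⟩
      · have := pow_le_two (by omega : k ≤ 1)
        refine ⟨2, by norm_num; omega, by omega⟩
    · intro i hi
      match i with
      | 0 => rw [← tb0_rest hm] at hi; rw [← tb0_rest hl]; exact hand 0 hi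
      | 1 => exact tb1_true hl
      | (j+2) => rw [← tb_rest hm] at hi; rw [← tb_rest hl]; exact hand _ hi

lemma g_sub_two_eq_zero {l x : ℕ} (hl : l % 4 = 2) (hx : x % 4 = 2) :
    ¬ ContainsBase2 (l - 2) x := by
  rintro ⟨-, hand⟩
  rw [land_eq_left_iff] at hand
  have h1 := hand 1 (tb1_true hx)
  have h2 : (l - 2) % 4 = 0 := by omega
  rw [tb1_false h2] at h1
  exact absurd h1 (by simp)

theorem stmt_6 (l m : ℕ) (hl : l % 4 = 2) (hl6 : 6 ≤ l) (hm : Even m) :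
    g l m = g (l - 2) m + g (l - 2) ((m : ℤ) - 2) := by
  have hm2 : m % 2 = 0 := Nat.even_iff.mp hm
  have htn : ((m : ℤ)).toNat = m := Int.toNat_natCast m
  rcases (by omega : m % 4 = 0 ∨ m % 4 = 2) with h0 | h2
  · have hz : g (l - 2) ((m : ℤ) - 2) = 0 := by
      unfold g
      rw [if_neg]
      rintro ⟨hnn, hcon⟩
      have hm2' : 2 ≤ m := by omega
      have : ((m : ℤ) - 2).toNat = m - 2 := by omega
      rw [this] at hcon
      exact g_sub_two_eq_zero hl (by omega) hcon
    rw [hz, add_zero]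
    unfold g
    rw [htn]
    by_cases hc : ContainsBase2 (l - 2) m
    · rw [if_pos ⟨by positivity, (contA hl hl6 h0).mpr hc⟩, if_pos ⟨by positivity, hc⟩]
    · rw [if_neg, if_neg]
      · rintro ⟨-, h⟩; exact hc h
      · rintro ⟨-, h⟩; exact hc ((contA hl hl6 h0).mp h)
  · have hz : g (l - 2) m = 0 := by
      unfold g
      rw [htn, if_neg]
      rintro ⟨-, hcon⟩
      exact g_sub_two_eq_zero hl h2 hcon
    rw [hz, zero_add]
    unfold g
    rw [htn]
    have h2m : 2 ≤ m := by omega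
    have hsub : ((m : ℤ) - 2).toNat = m - 2 := by omega
    rw [hsub]
    by_cases hc : ContainsBase2 (l - 2) (m - 2)
    · rw [if_pos ⟨by positivity, (contB hl hl6 h2).mpr hc⟩, if_pos ⟨by omega, hc⟩]
    · rw [if_neg, if_neg]
      · rintro ⟨-, h⟩; exact hc h
      · rintro ⟨-, h⟩; exact hc ((contB hl hl6 h2).mp h)
end

section
/- Let k and ℓ be natural numbers with k ≥ 1 and ℓ ≥ 1, and suppose ν₂(ℓ) = ν₂(k). Then g(k,ℓ) = g(k−1,ℓ−1) and g(k−1,ℓ) = 0. -/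
/-!
Put `v = ν₂(k) = ν₂(ℓ)`, so that `k = 2^(v+1) a + 2^v`, `k - 1 = 2^(v+1) a + (2^v - 1)` and likewise
for `ℓ` with some `b`. Both halves of "contains to base 2" split along the last `v + 1` binary
digits: for `a > 0`, "`k` contains `ℓ`" and "`k - 1` contains `ℓ - 1`" both reduce to "`a`
contains `b`", since the low parts agree (`2^v` resp. `2^v - 1`). For `a = 0` both fail because
`k ≤ ℓ`. Finally `ℓ` has the binary digit `2^v`, which `k - 1` lacks.
-/

namespace Nat

theorem exists_eq_two_pow_succ_mul_add_two_pow {n : ℕ} (hn : n ≠ 0) :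
    ∃ a, n = 2 ^ (padicValNat 2 n + 1) * a + 2 ^ padicValNat 2 n ∧
      n - 1 = 2 ^ (padicValNat 2 n + 1) * a + (2 ^ padicValNat 2 n - 1) := by
  obtain ⟨m, hm⟩ : 2 ^ padicValNat 2 n ∣ n := pow_padicValNat_dvd
  have hm_odd : ¬ 2 ∣ m := by
    rintro ⟨q, rfl⟩
    refine pow_succ_padicValNat_not_dvd (p := 2) hn ⟨q, ?_⟩
    rwa [pow_succ, mul_assoc]
  have hn_eq : n = 2 ^ (padicValNat 2 n + 1) * (m / 2) + 2 ^ padicValNat 2 n := by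
    nth_rw 1 [hm]
    rw [pow_succ, mul_assoc, ← mul_add_one]
    congr 1
    omega
  exact ⟨m / 2, hn_eq, by have := Nat.two_pow_pos (padicValNat 2 n); omega⟩

theorem two_pow_mul_add_and_two_pow_mul_add {w a b r s : ℕ} (hr : r < 2 ^ w) (hs : s < 2 ^ w) :
    (2 ^ w * b + s) &&& (2 ^ w * a + r) = 2 ^ w * (b &&& a) + (s &&& r) := by
  apply eq_of_testBit_eq
  intro i
  simp only [testBit_and, testBit_two_pow_mul_add _ hr, testBit_two_pow_mul_add _ hs,
    testBit_two_pow_mul_add _ (and_lt_two_pow s hr)]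
  split_ifs <;> rfl

theorem mul_add_eq_mul_add_iff {d a b r s : ℕ} (hr : r < d) (hs : s < d) :
    d * b + s = d * a + r ↔ b = a ∧ s = r := by
  refine ⟨fun h => ?_, fun ⟨hb, hs⟩ => hb ▸ hs ▸ rfl⟩
  obtain ⟨hb, hs⟩ := (Nat.div_mod_unique (by omega)).mpr ⟨(add_comm _ _).trans h, hs⟩
  rw [mul_add_div (by omega), div_eq_of_lt hr] at hb
  rw [mul_add_mod, mod_eq_of_lt hr] at hs
  omega

theorem two_pow_mul_add_and_eq_left_iff {w a b r s : ℕ} (hr : r < 2 ^ w) (hs : s < 2 ^ w) :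
    (2 ^ w * b + s) &&& (2 ^ w * a + r) = 2 ^ w * b + s ↔ b &&& a = b ∧ s &&& r = s := by
  rw [two_pow_mul_add_and_two_pow_mul_add hr hs, mul_add_eq_mul_add_iff hs (and_lt_two_pow s hr)]

theorem exists_two_pow_between_two_pow_mul_add_iff {w a b r s : ℕ} (ha : 0 < a)
    (hr : r < 2 ^ w) (hs : s < 2 ^ w) :
    (∃ j, 2 ^ w * b + s < 2 ^ j ∧ 2 ^ j ≤ 2 ^ w * a + r) ↔ ∃ j, b < 2 ^ j ∧ 2 ^ j ≤ a := by
  have hw := Nat.two_pow_pos w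
  constructor
  · rintro ⟨j, hbj, hja⟩
    rcases le_or_gt j w with hjw | hwj
    · have : 2 ^ j ≤ 2 ^ w := Nat.pow_le_pow_right (by norm_num) hjw
      refine ⟨0, ?_, ha⟩
      nlinarith
    · obtain ⟨i, rfl⟩ := Nat.exists_eq_add_of_le hwj.le
      rw [pow_add] at hbj hja
      refine ⟨i, Nat.lt_of_mul_lt_mul_left (a := 2 ^ w) (by omega), ?_⟩
      refine Nat.lt_succ_iff.mp (Nat.lt_of_mul_lt_mul_left (a := 2 ^ w) ?_)
      rw [mul_add_one]
      omega
  · rintro ⟨j, hbj, hja⟩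
    refine ⟨w + j, ?_, ?_⟩
    · calc 2 ^ w * b + s < 2 ^ w * (b + 1) := by rw [mul_add_one]; omega
        _ ≤ 2 ^ (w + j) := by rw [pow_add]; exact Nat.mul_le_mul_left _ hbj
    · calc 2 ^ (w + j) = 2 ^ w * 2 ^ j := pow_add 2 w j
        _ ≤ 2 ^ w * a := Nat.mul_le_mul_left _ hja
        _ ≤ 2 ^ w * a + r := Nat.le_add_right _ _

end Nat

theorem ContainsBase2.lt {n m : ℕ} (h : ContainsBase2 n m) : m < n :=
  let ⟨⟨_, hm, hn⟩, _⟩ := h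
  hm.trans_le hn

theorem containsBase2_two_pow_mul_add_iff {w a b r s : ℕ} (ha : 0 < a)
    (hr : r < 2 ^ w) (hs : s < 2 ^ w) :
    ContainsBase2 (2 ^ w * a + r) (2 ^ w * b + s) ↔ ContainsBase2 a b ∧ s &&& r = s := by
  rw [ContainsBase2, ContainsBase2, Nat.exists_two_pow_between_two_pow_mul_add_iff ha hr hs,
    Nat.two_pow_mul_add_and_eq_left_iff hr hs, and_assoc]

theorem containsBase2_sub_one_iff {k l : ℕ} (hk : k ≠ 0) (hl : l ≠ 0)
    (h : padicValNat 2 l = padicValNat 2 k) :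
    ContainsBase2 (k - 1) (l - 1) ↔ ContainsBase2 k l := by
  obtain ⟨a, hka, hka'⟩ := Nat.exists_eq_two_pow_succ_mul_add_two_pow hk
  obtain ⟨b, hlb, hlb'⟩ := Nat.exists_eq_two_pow_succ_mul_add_two_pow hl
  rw [h] at hlb hlb'
  generalize padicValNat 2 k = v at hka hka' hlb hlb'
  have hv : 2 ^ v < 2 ^ (v + 1) := Nat.pow_lt_pow_succ (by norm_num)
  rcases Nat.eq_zero_or_pos a with rfl | ha
  · have hkl : k ≤ l := by omega
    exact iff_of_false (fun hc => absurd hc.lt (by omega)) (fun hc => absurd hc.lt (by omega))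
  · rw [hka', hlb', hka, hlb, containsBase2_two_pow_mul_add_iff ha (by omega) (by omega),
      containsBase2_two_pow_mul_add_iff ha hv hv]
    simp only [Nat.and_self]

theorem not_containsBase2_sub_one {k l : ℕ} (hk : k ≠ 0) (hl : l ≠ 0)
    (h : padicValNat 2 l = padicValNat 2 k) : ¬ ContainsBase2 (k - 1) l := by
  obtain ⟨a, -, hka'⟩ := Nat.exists_eq_two_pow_succ_mul_add_two_pow hk
  obtain ⟨b, hlb, -⟩ := Nat.exists_eq_two_pow_succ_mul_add_two_pow hl
  rw [h] at hlb
  generalize padicValNat 2 k = v at hka' hlb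
  have hv : 2 ^ v < 2 ^ (v + 1) := Nat.pow_lt_pow_succ (by norm_num)
  rintro ⟨-, hand⟩
  rw [hka', hlb, Nat.two_pow_mul_add_and_eq_left_iff (by omega) hv] at hand
  exact (Nat.two_pow_pos v).ne (by simpa using hand.2)

open Classical in
theorem g_natCast (n m : ℕ) : g n m = if ContainsBase2 n m then 1 else 0 := by
  simp [g]

theorem stmt_11 (k l : ℕ) (hk : 1 ≤ k) (hl : 1 ≤ l)
    (h : padicValNat 2 l = padicValNat 2 k) :
    g k l = g (k - 1) ((l : ℤ) - 1) ∧ g (k - 1) l = 0 := by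
  have hk0 := Nat.one_le_iff_ne_zero.mp hk
  have hl0 := Nat.one_le_iff_ne_zero.mp hl
  have hl_sub : (l : ℤ) - 1 = ((l - 1 : ℕ) : ℤ) := by omega
  refine ⟨?_, ?_⟩
  · rw [hl_sub, g_natCast, g_natCast, containsBase2_sub_one_iff hk0 hl0 h]
  · rw [g_natCast, if_neg (not_containsBase2_sub_one hk0 hl0 h)]
end
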